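/- arXiv:2310.12578 — 2 statements merged into one kernel-verified Lean document; each statement's English description precedes it below -/
import Mathlib

section
/- Let X₀ be a Banach space and A a closed operator such that {λ(A+λ)^{-1} : λ ∈ S_θ \ {0}} is R-bounded with bound β, and let P be a perturbation such that ‖P(A+λ)^{-1}‖_{L(X₀)} ≤ ε for all λ ∈ S_θ with εβ' < 1 for a suitable constant β' depending only on β and θ. Then A + P (with domain D(A)) is invertible R-sectorial of angle θ, with R-bound controlled by β, θ and ε via the Neumann series estimate: for Rademacher sums, ‖Σ ε_ℓ λ_ℓ (A+P+λ_ℓ)^{-1} u_ℓ‖_{L²(0,1;X₀)} ≤ β Σ_{k≥0} (ε C(β,θ))^k ‖Σ ε_ℓ u_ℓ‖_{L²(0,1;X₀)} whenever ε C(β,θ) < 1. -/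
/-!
By the resolvent identity `(A + λ)⁻¹ = A⁻¹ (1 - λ(A + λ)⁻¹)`, the perturbation terms factor as
`-P(A + λ)⁻¹ = (P A⁻¹)(λ(A + λ)⁻¹ - 1)`, a fixed operator of norm `≤ ε` times a member of an
`R`-bounded family shifted by `-1`; so they form an `R`-bounded family with bound `ε(β + 1) < 1`.
`R`-bounds are submultiplicative and subadditive, hence the Neumann series
`λ(A + P + λ)⁻¹ = λ(A + λ)⁻¹ ∑ₖ (-P(A + λ)⁻¹)ᵏ` has `R`-bound at most
`β ∑ₖ (ε(β + 1))ᵏ = β / (1 - ε(β + 1))`, which is below the claimed bound.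
-/

noncomputable section

open MeasureTheory Set

/-- The closed sector `S_θ = {λ : |arg λ| ≤ θ} ∪ {0}`. -/
def Sector (θ : ℝ) : Set ℂ := {z : ℂ | z = 0 ∨ |Complex.arg z| ≤ θ}

variable {X₀ X₁ : Type*} [NormedAddCommGroup X₀] [NormedSpace ℂ X₀]
  [NormedAddCommGroup X₁] [NormedSpace ℂ X₁]

/-- `Rl` is the resolvent of `-A` at `λ`, where the (possibly unbounded) operator `A` in `X₀`
is presented by its domain `X₁` (endowed with the graph norm), the continuous embedding
`J : X₁ → X₀` and its action `A : X₁ → X₀`. -/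
def IsResolventAt (J A : X₁ →L[ℂ] X₀) (lam : ℂ) (Rl : X₀ →L[ℂ] X₁) : Prop :=
  (A + lam • J).comp Rl = ContinuousLinearMap.id ℂ X₀ ∧
  Rl.comp (A + lam • J) = ContinuousLinearMap.id ℂ X₁

/-- `A ∈ 𝒫(K,θ)` : invertible sectorial of angle `θ` with sectorial bound `K`,
witnessed by the resolvent family `R`. -/
def IsSectorial (J A : X₁ →L[ℂ] X₀) (θ K : ℝ) (R : ℂ → X₀ →L[ℂ] X₁) : Prop :=
  ∀ lam ∈ Sector θ, IsResolventAt J A lam (R lam) ∧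
    (1 + ‖lam‖) * ‖J.comp (R lam)‖ ≤ K

/-- A set of bounded operators is `R`-bounded with `R`-bound `C` (formulated via
averages over all choices of signs, which coincides with the Rademacher formulation). -/
def RademacherBound {X : Type*} [NormedAddCommGroup X] [NormedSpace ℂ X]
    (E : Set (X →L[ℂ] X)) (C : ℝ) : Prop :=
  ∀ (N : ℕ) (T : Fin N → X →L[ℂ] X) (x : Fin N → X), (∀ i, T i ∈ E) →
    ∑ ε : Fin N → Bool, ‖∑ i, (if ε i then T i (x i) else -(T i (x i)))‖ ^ 2
      ≤ C ^ 2 * ∑ ε : Fin N → Bool, ‖∑ i, (if ε i then x i else -(x i))‖ ^ 2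

/-- The constant `S(θ)`. -/
def Sfun (θ : ℝ) : ℝ := if Real.pi / 2 ≤ θ then Real.sin θ else 1

/-- The class `H₀^∞(φ)` of bounded holomorphic functions on `ℂ \ S_φ` with decay. -/
def HzeroClass (φ : ℝ) (f : ℂ → ℂ) : Prop :=
  DifferentiableOn ℂ f (Sector φ)ᶜ ∧
  ∃ c > (0:ℝ), ∃ η > (0:ℝ), ∀ z ∈ (Sector φ)ᶜ,
    ‖f z‖ ≤ c * (‖z‖ / (1 + ‖z‖ ^ 2)) ^ η

/-- The Dunford integral `(2πi)⁻¹ ∫_{Γ_θ} f(λ)(A+λ)⁻¹ x dλ` along the boundary of the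
sector of angle `θ`, for the operator with resolvent family `R`. -/
def dunford (J : X₁ →L[ℂ] X₀) (R : ℂ → X₀ →L[ℂ] X₁) (θ : ℝ) (f : ℂ → ℂ) (x : X₀) : X₀ :=
  (2 * (Real.pi : ℂ) * Complex.I)⁻¹ •
    ((∫ r in Set.Ioi (0:ℝ),
        (f ((r : ℂ) * Complex.exp ((θ : ℂ) * Complex.I)) * Complex.exp ((θ : ℂ) * Complex.I)) •
          J (R ((r : ℂ) * Complex.exp ((θ : ℂ) * Complex.I)) x)) -
      ∫ r in Set.Ioi (0:ℝ),
        (f ((r : ℂ) * Complex.exp (-(θ : ℂ) * Complex.I)) * Complex.exp (-(θ : ℂ) * Complex.I)) •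
          J (R ((r : ℂ) * Complex.exp (-(θ : ℂ) * Complex.I)) x))

/-- Bounded `H^∞(φ)`-calculus bound `C` for the operator with resolvent family `R`,
the Dunford contour being `Γ_θ`. -/
def HinftyBound (J : X₁ →L[ℂ] X₀) (R : ℂ → X₀ →L[ℂ] X₁) (θ φ C : ℝ) : Prop :=
  ∀ f : ℂ → ℂ, HzeroClass φ f →
    ∀ x : X₀, ‖dunford J R θ f x‖ ≤ C * (⨆ z ∈ (Sector φ)ᶜ, ‖f z‖) * ‖x‖

/-- Bounded `H^∞`-calculus of angle `φ`. -/
def HasBddHinftyCalculus (J A : X₁ →L[ℂ] X₀) (φ : ℝ) : Prop :=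
  ∃ θ ∈ Set.Ioo φ Real.pi, ∃ (R : ℂ → X₀ →L[ℂ] X₁) (K C : ℝ),
    IsSectorial J A θ K R ∧ HinftyBound J R θ φ C

/-- `R`-bounded `H^∞`-calculus of angle `φ`. -/
def HasRBddHinftyCalculus (J A : X₁ →L[ℂ] X₀) (φ : ℝ) : Prop :=
  ∃ θ ∈ Set.Ioo φ Real.pi, ∃ (R : ℂ → X₀ →L[ℂ] X₁) (K : ℝ),
    IsSectorial J A θ K R ∧
    ∃ β : ℝ, RademacherBound {T : X₀ →L[ℂ] X₀ | ∃ f : ℂ → ℂ, HzeroClass φ f ∧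
      (∀ z ∈ (Sector φ)ᶜ, ‖f z‖ ≤ 1) ∧ ∀ x, T x = dunford J R θ f x} β

/-- The UMD property, via the unconditionality of martingale differences. -/
def IsUMD (X : Type*) [NormedAddCommGroup X] [NormedSpace ℂ X] [CompleteSpace X] : Prop :=
  ∀ p : ℝ, 1 < p → ∃ β : ℝ, 0 < β ∧
    ∀ (Ω : Type) (mΩ : MeasurableSpace Ω) (μ : MeasureTheory.Measure Ω)
      (ℱ : MeasureTheory.Filtration ℕ mΩ) (f : ℕ → Ω → X) (ε : ℕ → ℝ),
      MeasureTheory.IsProbabilityMeasure μ → MeasureTheory.Martingale f ℱ μ →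
      (∀ k, ε k = 1 ∨ ε k = -1) → ∀ N : ℕ,
      MeasureTheory.eLpNorm
          (fun ω => ∑ k ∈ Finset.range N, (ε k : ℂ) • (f (k+1) ω - f k ω))
          (ENNReal.ofReal p) μ
        ≤ ENNReal.ofReal β * MeasureTheory.eLpNorm (f N) (ENNReal.ofReal p) μ

open scoped Pointwise

namespace RademacherBound

variable {X : Type*} [NormedAddCommGroup X] [NormedSpace ℂ X]

/-- The Rademacher sum `∑ εᵢ yᵢ` as a vector indexed by the sign patterns `ε`, so that its
`ℓ²` norm is the `L²(0,1;X)` norm of the Rademacher sum up to the factor `2 ^ (N / 2)`. -/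
def radSum (N : ℕ) : (Fin N → X) →L[ℂ] PiLp 2 (fun _ : Fin N → Bool => X) :=
  (PiLp.continuousLinearEquiv 2 ℂ _).symm.toContinuousLinearMap.comp
    (ContinuousLinearMap.pi fun e => ∑ i,
      if e i then ContinuousLinearMap.proj i else -ContinuousLinearMap.proj i)

theorem radSum_apply {N : ℕ} (y : Fin N → X) (e : Fin N → Bool) :
    radSum N y e = ∑ i, if e i then y i else -(y i) := by
  change (∑ i, if e i then ContinuousLinearMap.proj i else -ContinuousLinearMap.proj i :
    (Fin N → X) →L[ℂ] X) y = _
  rw [sum_apply]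
  exact Finset.sum_congr rfl fun i _ => by split_ifs <;> rfl

theorem norm_radSum_sq {N : ℕ} (y : Fin N → X) :
    ‖radSum N y‖ ^ 2 = ∑ e : Fin N → Bool, ‖∑ i, if e i then y i else -(y i)‖ ^ 2 := by
  simp only [PiLp.norm_sq_eq_of_L2, radSum_apply]

variable {E F : Set (X →L[ℂ] X)} {C D : ℝ}

theorem iff_norm_radSum_le (hC : 0 ≤ C) :
    RademacherBound E C ↔ ∀ (N : ℕ) (T : Fin N → X →L[ℂ] X) (x : Fin N → X), (∀ i, T i ∈ E) →
      ‖radSum N (fun i => T i (x i))‖ ≤ C * ‖radSum N x‖ := by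
  refine forall₄_congr fun N T x _ => ?_
  rw [← norm_radSum_sq, ← norm_radSum_sq, ← mul_pow]
  exact pow_le_pow_iff_left₀ (norm_nonneg _) (by positivity) two_ne_zero

theorem mono (hE : RademacherBound E C) (hFE : F ⊆ E) : RademacherBound F C :=
  fun N T x hT => hE N T x fun i => hFE (hT i)

theorem of_le (hE : RademacherBound E C) (hC : 0 ≤ C) (hCD : C ≤ D) : RademacherBound E D :=
  fun N T x hT => (hE N T x hT).trans <|
    mul_le_mul_of_nonneg_right (pow_le_pow_left₀ hC hCD 2) (by positivity)

theorem singleton (Q : X →L[ℂ] X) : RademacherBound {Q} ‖Q‖ := by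
  intro N T x hT
  obtain rfl : T = fun _ => Q := funext hT
  rw [Finset.mul_sum]
  refine Finset.sum_le_sum fun e _ => ?_
  have hQ : (∑ i, if e i then Q (x i) else -Q (x i)) = Q (∑ i, if e i then x i else -(x i)) := by
    simp only [map_sum, apply_ite Q, map_neg]
  rw [hQ, ← mul_pow]
  exact pow_le_pow_left₀ (norm_nonneg _) (Q.le_opNorm _) 2

theorem mul (hE : RademacherBound E C) (hF : RademacherBound F D) :
    RademacherBound (E * F) (C * D) := by
  intro N T x hT
  choose S hS U hU hSU using fun i => Set.mem_mul.mp (hT i)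
  calc _ = ∑ e : Fin N → Bool, ‖∑ i, if e i then S i (U i (x i)) else -S i (U i (x i))‖ ^ 2 := by
        simp only [← hSU]
        rfl
    _ ≤ C ^ 2 * ∑ e : Fin N → Bool, ‖∑ i, if e i then U i (x i) else -U i (x i)‖ ^ 2 :=
        hE N S _ hS
    _ ≤ (C * D) ^ 2 * ∑ e : Fin N → Bool, ‖∑ i, if e i then x i else -x i‖ ^ 2 := by
        rw [mul_pow, mul_assoc]
        exact mul_le_mul_of_nonneg_left (hF N U x hU) (sq_nonneg C)

theorem pow (hE : RademacherBound E C) : ∀ n : ℕ, RademacherBound (E ^ n) (C ^ n)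
  | 0 => by
    rw [pow_zero, pow_zero, ← Set.singleton_one]
    exact (singleton 1).of_le (norm_nonneg _) ContinuousLinearMap.norm_id_le
  | n + 1 => by
    rw [pow_succ, pow_succ]
    exact (hE.pow n).mul hE

theorem add (hE : RademacherBound E C) (hF : RademacherBound F D) (hC : 0 ≤ C) (hD : 0 ≤ D) :
    RademacherBound (E + F) (C + D) := by
  rw [iff_norm_radSum_le (add_nonneg hC hD)]
  rw [iff_norm_radSum_le hC] at hE
  rw [iff_norm_radSum_le hD] at hF
  intro N T x hT
  choose S hS U hU hSU using fun i => Set.mem_add.mp (hT i)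
  calc ‖radSum N (fun i => T i (x i))‖
      = ‖radSum N (fun i => S i (x i)) + radSum N (fun i => U i (x i))‖ := by
        simp only [← hSU, add_apply, ← map_add]
        rfl
    _ ≤ C * ‖radSum N x‖ + D * ‖radSum N x‖ :=
        (norm_add_le _ _).trans (add_le_add (hE N S x hS) (hF N U x hU))
    _ = (C + D) * ‖radSum N x‖ := by ring

theorem norm_le (hE : RademacherBound E C) (hC : 0 ≤ C) {T : X →L[ℂ] X} (hT : T ∈ E) :
    ‖T‖ ≤ C := by
  refine T.opNorm_le_bound hC fun x => ?_
  have h := hE 1 (fun _ => T) (fun _ => x) fun _ => hT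
  simp only [Fin.sum_univ_one, apply_ite (‖·‖ ^ 2), norm_neg, ite_self, Finset.sum_const,
    nsmul_eq_mul, Finset.card_univ, Fintype.card_fun, Fintype.card_bool, Fintype.card_fin] at h
  have h' : ‖T x‖ ^ 2 ≤ (C * ‖x‖) ^ 2 := by
    rw [mul_pow]
    norm_num at h
    linarith
  exact (pow_le_pow_iff_left₀ (norm_nonneg _) (by positivity) two_ne_zero).mp h'

theorem tsum_pow [CompleteSpace X] (hE : RademacherBound E C) (hC0 : 0 ≤ C) (hC1 : C < 1) :
    RademacherBound ((fun T => ∑' k : ℕ, T ^ k) '' E) (1 - C)⁻¹ := by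
  rw [iff_norm_radSum_le (inv_nonneg.mpr (sub_nonneg.mpr hC1.le))]
  intro N T x hT
  choose U hU hUT using hT
  have hsum : HasSum (fun k : ℕ => radSum N fun i => (U i ^ k) (x i))
      (radSum N fun i => T i (x i)) := by
    refine HasSum.mapL (radSum N) (Pi.hasSum.mpr fun i => ?_)
    rw [← hUT i]
    have hUi : ‖U i‖ < 1 := (hE.norm_le hC0 (hU i)).trans_lt hC1
    exact (summable_geometric_of_norm_lt_one hUi).hasSum.mapL
      (ContinuousLinearMap.apply ℂ X (x i))
  refine hsum.norm_le_of_bounded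
    ((hasSum_geometric_of_lt_one hC0 hC1).mul_right ‖radSum N x‖) fun k => ?_
  exact (iff_norm_radSum_le (pow_nonneg hC0 k)).mp (hE.pow k) N _ x
    fun i => Set.pow_mem_pow (hU i)

end RademacherBound

open ContinuousLinearMap

/-- `(A + P + λ)⁻¹` as a Neumann series, given `Rl = (A + λ)⁻¹`; junk unless `‖P Rl‖ < 1`. -/
def perturbedResolvent (P : X₁ →L[ℂ] X₀) (Rl : X₀ →L[ℂ] X₁) : X₀ →L[ℂ] X₁ :=
  Rl.comp (∑' k : ℕ, (-(P.comp Rl)) ^ k)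

namespace IsResolventAt

variable {J A P : X₁ →L[ℂ] X₀} {lam : ℂ} {R₀ Rl : X₀ →L[ℂ] X₁}

theorem eq_comp_one_sub (h₀ : IsResolventAt J A 0 R₀) (h : IsResolventAt J A lam Rl) :
    Rl = R₀.comp (1 - lam • J.comp Rl) := by
  have hR₀A : R₀.comp A = ContinuousLinearMap.id ℂ X₁ := by simpa using h₀.2
  have hARl : A.comp Rl = 1 - lam • J.comp Rl := by
    rw [eq_sub_iff_add_eq, ← smul_comp, ← add_comp]
    exact h.1
  rw [← hARl, ← comp_assoc, hR₀A, id_comp]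

theorem perturb [CompleteSpace X₀] (h : IsResolventAt J A lam Rl) (hP : ‖P.comp Rl‖ < 1) :
    IsResolventAt J (A + P) lam (perturbedResolvent P Rl) := by
  set t := -(P.comp Rl)
  have ht : ‖t‖ < 1 := by rwa [norm_neg]
  have hright : ((A + P) + lam • J).comp Rl = 1 - t := by
    rw [add_right_comm, add_comp, h.1, sub_neg_eq_add, one_def]
  have hleft : (A + P) + lam • J = (1 - t).comp (A + lam • J) := by
    rw [sub_neg_eq_add, add_comp, comp_assoc, h.2, comp_id, one_def, id_comp, add_right_comm]
  constructor
  · rw [perturbedResolvent, ← comp_assoc, hright, ← mul_def, mul_neg_geom_series t ht, one_def]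
  · rw [perturbedResolvent, hleft, comp_assoc, ← comp_assoc _ (1 - t), ← mul_def,
      geom_series_mul_neg t ht, one_def, id_comp, h.2]

end IsResolventAt

theorem norm_comp_perturbedResolvent_le [CompleteSpace X₀] (J P : X₁ →L[ℂ] X₀)
    {Rl : X₀ →L[ℂ] X₁} {ε : ℝ} (hP : ‖P.comp Rl‖ ≤ ε) (hε : ε < 1) :
    ‖J.comp (perturbedResolvent P Rl)‖ ≤ ‖J.comp Rl‖ * (1 - ε)⁻¹ := by
  have ht : ‖-(P.comp Rl)‖ < 1 := by rw [norm_neg]; exact hP.trans_lt hε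
  have hsum : ‖∑' k : ℕ, (-(P.comp Rl)) ^ k‖ ≤ (1 - ε)⁻¹ := by
    refine (tsum_geometric_le_of_norm_lt_one _ ht).trans ?_
    have : (1 - ‖-(P.comp Rl)‖)⁻¹ ≤ (1 - ε)⁻¹ := by
      rw [norm_neg]
      exact inv_anti₀ (by linarith) (by linarith)
    have hone : ‖(1 : X₀ →L[ℂ] X₀)‖ ≤ 1 := norm_id_le
    linarith
  rw [perturbedResolvent, ← comp_assoc]
  exact (opNorm_comp_le _ _).trans (mul_le_mul_of_nonneg_left hsum (norm_nonneg _))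

theorem rademacherBound_smul_comp_perturbedResolvent [CompleteSpace X₀] {J A P : X₁ →L[ℂ] X₀}
    {Λ : Set ℂ} {R : ℂ → X₀ →L[ℂ] X₁} {β ε : ℝ} (h₀ : IsResolventAt J A 0 (R 0))
    (hres : ∀ lam ∈ Λ, IsResolventAt J A lam (R lam))
    (hRb : RademacherBound {T | ∃ lam ∈ Λ, lam ≠ 0 ∧ T = lam • J.comp (R lam)} β) (hβ : 0 ≤ β)
    (hP : ‖P.comp (R 0)‖ ≤ ε) (hsmall : ε * (β + 1) < 1) :
    RademacherBound
      {T | ∃ lam ∈ Λ, lam ≠ 0 ∧ T = lam • J.comp (perturbedResolvent P (R lam))}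
      (β * (1 - ε * (β + 1))⁻¹) := by
  have hε : 0 ≤ ε := (norm_nonneg _).trans hP
  have hneg : RademacherBound {(-1 : X₀ →L[ℂ] X₀)} 1 :=
    (RademacherBound.singleton _).of_le (norm_nonneg _) (by rw [norm_neg]; exact norm_id_le)
  -- `-P(A + λ)⁻¹ = P A⁻¹ (λ(A + λ)⁻¹ - 1)` by the resolvent identity
  have hF := ((RademacherBound.singleton (P.comp (R 0))).of_le (norm_nonneg _) hP).mul
    (hRb.add hneg hβ zero_le_one)
  refine (hRb.mul (hF.tsum_pow (by positivity) hsmall)).mono ?_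
  rintro _ ⟨lam, hlam, hlam0, rfl⟩
  have hS : lam • J.comp (R lam) ∈ {T | ∃ lam ∈ Λ, lam ≠ 0 ∧ T = lam • J.comp (R lam)} :=
    ⟨lam, hlam, hlam0, rfl⟩
  have ht : P.comp (R 0) * (lam • J.comp (R lam) + -1) = -(P.comp (R lam)) := by
    conv_rhs => rw [h₀.eq_comp_one_sub (hres lam hlam)]
    rw [mul_def, ← comp_neg, ← comp_neg, comp_assoc, neg_sub, sub_eq_add_neg]
  refine Set.mul_mem_mul hS ⟨_, Set.mul_mem_mul rfl (Set.add_mem_add hS rfl), ?_⟩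
  rw [ht]

theorem Sfun_pos {θ : ℝ} (hθ : θ < Real.pi) : 0 < Sfun θ := by
  unfold Sfun
  split_ifs with h
  · exact Real.sin_pos_of_pos_of_lt_pi (lt_of_lt_of_le (by positivity) h) hθ
  · exact one_pos

theorem rsectorial_perturbation_general
    {X₀ X₁ : Type*} [NormedAddCommGroup X₀] [NormedSpace ℂ X₀] [CompleteSpace X₀]
    [NormedAddCommGroup X₁] [NormedSpace ℂ X₁]
    (J A P : X₁ →L[ℂ] X₀) (θ β ε : ℝ) (hθ : θ ∈ Set.Ico 0 Real.pi) (hβ : 1 ≤ β)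
    (R : ℂ → X₀ →L[ℂ] X₁)
    (hres : ∀ lam ∈ Sector θ, IsResolventAt J A lam (R lam))
    (hsect : ∃ K : ℝ, ∀ lam ∈ Sector θ, (1 + ‖lam‖) * ‖J.comp (R lam)‖ ≤ K)
    (hRb : RademacherBound
      {T : X₀ →L[ℂ] X₀ | ∃ lam ∈ Sector θ, lam ≠ 0 ∧ T = lam • J.comp (R lam)} β)
    (hP : ∀ lam ∈ Sector θ, ‖P.comp (R lam)‖ ≤ ε)
    (hsmall : ε * ((β + 1) * (1 + 2 / Sfun θ)) < 1) :
    ∃ R' : ℂ → X₀ →L[ℂ] X₁,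
      (∀ lam ∈ Sector θ, IsResolventAt J (A + P) lam (R' lam)) ∧
      (∃ K' : ℝ, ∀ lam ∈ Sector θ, (1 + ‖lam‖) * ‖J.comp (R' lam)‖ ≤ K') ∧
      RademacherBound
        {T : X₀ →L[ℂ] X₀ | ∃ lam ∈ Sector θ, lam ≠ 0 ∧ T = lam • J.comp (R' lam)}
        (β / (1 - ε * ((β + 1) * (1 + 2 / Sfun θ)))) := by
  have h₀ : (0 : ℂ) ∈ Sector θ := Or.inl rfl
  have hε : 0 ≤ ε := (norm_nonneg _).trans (hP 0 h₀)
  have hβ₀ : 0 ≤ β := zero_le_one.trans hβ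
  have hC : ε * (β + 1) ≤ ε * ((β + 1) * (1 + 2 / Sfun θ)) := by
    gcongr
    exact le_mul_of_one_le_right (by linarith)
      (le_add_of_nonneg_right (div_nonneg zero_le_two (Sfun_pos hθ.2).le))
  have hε₁ : ε < 1 := by nlinarith
  obtain ⟨K, hK⟩ := hsect
  refine ⟨fun lam => perturbedResolvent P (R lam),
    fun lam hlam => (hres lam hlam).perturb ((hP lam hlam).trans_lt hε₁),
    ⟨K * (1 - ε)⁻¹, fun lam hlam => ?_⟩, ?_⟩
  · have hinv : 0 ≤ (1 - ε)⁻¹ := inv_nonneg.mpr (by linarith)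
    calc (1 + ‖lam‖) * ‖J.comp (perturbedResolvent P (R lam))‖
        ≤ (1 + ‖lam‖) * (‖J.comp (R lam)‖ * (1 - ε)⁻¹) := by
          gcongr
          exact norm_comp_perturbedResolvent_le J P (hP lam hlam) hε₁
      _ ≤ K * (1 - ε)⁻¹ := by
          rw [← mul_assoc]
          exact mul_le_mul_of_nonneg_right (hK lam hlam) hinv
  · refine (rademacherBound_smul_comp_perturbedResolvent (hres 0 h₀) hres hRb hβ₀ (hP 0 h₀)
      (hC.trans_lt hsmall)).of_le ?_ ?_
    · exact mul_nonneg hβ₀ (inv_nonneg.mpr (by linarith))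
    · rw [div_eq_mul_inv]
      gcongr

/-- `R`-sectoriality is stable under small relative perturbations: if `A` is
invertible `R`-sectorial of angle `θ` with `R`-bound `β` and `‖P(A+λ)⁻¹‖ ≤ ε` on `S_θ` with
`ε (β+1)(1+2/S(θ)) < 1`, then `A + P` is invertible `R`-sectorial of angle `θ` with `R`-bound
`β / (1 − ε(β+1)(1+2/S(θ)))`. -/
theorem rsectorial_perturbation
    {X₀ X₁ : Type*} [NormedAddCommGroup X₀] [NormedSpace ℂ X₀] [CompleteSpace X₀]
    [NormedAddCommGroup X₁] [NormedSpace ℂ X₁] [CompleteSpace X₁]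
    (J A P : X₁ →L[ℂ] X₀) (θ β ε : ℝ) (hθ : θ ∈ Set.Ico 0 Real.pi) (hβ : 1 ≤ β)
    (R : ℂ → X₀ →L[ℂ] X₁)
    (hres : ∀ lam ∈ Sector θ, IsResolventAt J A lam (R lam))
    (hsect : ∃ K : ℝ, ∀ lam ∈ Sector θ, (1 + ‖lam‖) * ‖J.comp (R lam)‖ ≤ K)
    (hRb : RademacherBound
      {T : X₀ →L[ℂ] X₀ | ∃ lam ∈ Sector θ, lam ≠ 0 ∧ T = lam • J.comp (R lam)} β)
    (hε : 0 ≤ ε) (hP : ∀ lam ∈ Sector θ, ‖P.comp (R lam)‖ ≤ ε)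
    (hsmall : ε * ((β + 1) * (1 + 2 / Sfun θ)) < 1) :
    ∃ R' : ℂ → X₀ →L[ℂ] X₁,
      (∀ lam ∈ Sector θ, IsResolventAt J (A + P) lam (R' lam)) ∧
      (∃ K' : ℝ, ∀ lam ∈ Sector θ, (1 + ‖lam‖) * ‖J.comp (R' lam)‖ ≤ K') ∧
      RademacherBound
        {T : X₀ →L[ℂ] X₀ | ∃ lam ∈ Sector θ, lam ≠ 0 ∧ T = lam • J.comp (R' lam)}
        (β / (1 - ε * ((β + 1) * (1 + 2 / Sfun θ)))) :=
  rsectorial_perturbation_general J A P θ β ε hθ hβ R hres hsect hRb hP hsmall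
end
end

section
/- Let X be a Banach space, θ ∈ [0,π), and let A be a closed operator on X with a bounded H^∞(θ)-calculus. Then for any p ∈ (1,∞), the canonical extension of A to L^p(Ω; X) (for a σ-finite measure space Ω), acting pointwise with domain L^p(Ω; D(A)), again has bounded H^∞-calculus of angle θ, with resolvents and functional calculus acting pointwise: (f(-A_ext) u)(ω) = f(-A) u(ω) for a.e. ω. The calculus bound of the extension is controlled by the calculus bound of A via Kahane's inequality. -/
noncomputable section

open MeasureTheory Set

variable {X₀ X₁ : Type*} [NormedAddCommGroup X₀] [NormedSpace ℂ X₀]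
  [NormedAddCommGroup X₁] [NormedSpace ℂ X₁]

/-!
Along a ray `r ↦ r e` of the contour, the resolvent identity makes `λ ↦ J (A + λ)⁻¹` Lipschitz,
and sectoriality together with the decay of `f ∈ H₀^∞` bounds the operator-valued Dunford
integrand by `c K (r / (1 + r²))^η / (1 + r)`, which is integrable on `(0, ∞)`. So `f(-A)` is
an operator-norm Bochner integral `T`. Passing to the pointwise extension `T ↦ T_ext` is a
bounded linear map between operator spaces, hence commutes with that integral: the calculus of
the extension is `f(-A)` applied pointwise, and the calculus bound of `A` transfers pointwise,
with the same constant, to `L^p(Ω; X)`.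
-/

section Rays

open Complex

lemma ofReal_mul_mem_sector {e : ℂ} {θ r : ℝ} (hr : 0 < r) (h : |arg e| ≤ θ) :
    (r : ℂ) * e ∈ Sector θ :=
  Or.inr (by rwa [arg_real_mul e hr])

lemma ofReal_mul_mem_sector_compl {e : ℂ} (he : e ≠ 0) {θ r : ℝ} (hr : 0 < r)
    (h : θ < |arg e|) : (r : ℂ) * e ∈ (Sector θ)ᶜ := by
  rintro (h0 | hle)
  · exact mul_ne_zero (ofReal_ne_zero.mpr hr.ne') he h0
  · rw [arg_real_mul e hr] at hle
    linarith

lemma abs_arg_exp_ofReal_mul_I {φ : ℝ} (h : |φ| < Real.pi) : |arg (exp (φ * I))| = |φ| := by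
  rw [exp_mul_I, arg_cos_add_sin_mul_I]
  exact ⟨by linarith [neg_abs_le φ], by linarith [le_abs_self φ]⟩

end Rays

section Sectorial

variable {J A : X₁ →L[ℂ] X₀}

theorem IsResolventAt.comp_sub_comp {lam mu : ℂ} {Rl Rm : X₀ →L[ℂ] X₁}
    (hl : IsResolventAt J A lam Rl) (hm : IsResolventAt J A mu Rm) :
    J.comp Rm - J.comp Rl = (lam - mu) • (J.comp Rm).comp (J.comp Rl) := by
  ext x
  have hx := congrArg (fun T : X₀ →L[ℂ] X₀ => Rm (T x)) hl.1
  have hy := congrArg (fun T : X₁ →L[ℂ] X₁ => T (Rl x)) hm.2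
  simp only [ContinuousLinearMap.comp_apply, add_apply,
    smul_apply, ContinuousLinearMap.id_apply, map_add, map_smul] at hx hy
  have hdiff : Rm x - Rl x = (lam - mu) • Rm (J (Rl x)) := by
    linear_combination (norm := module) hy - hx
  simp only [sub_apply, ContinuousLinearMap.comp_apply,
    smul_apply, ← map_sub, hdiff, map_smul]

variable {θ K : ℝ} {R : ℂ → X₀ →L[ℂ] X₁}

theorem IsSectorial.norm_comp_le_div (h : IsSectorial J A θ K R) {lam : ℂ} (hl : lam ∈ Sector θ) :
    ‖J.comp (R lam)‖ ≤ K / (1 + ‖lam‖) := by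
  rw [le_div_iff₀ (by positivity), mul_comm]
  exact (h lam hl).2

theorem IsSectorial.norm_comp_le_const (h : IsSectorial J A θ K R) {lam : ℂ} (hl : lam ∈ Sector θ) :
    ‖J.comp (R lam)‖ ≤ K :=
  (le_mul_of_one_le_left (norm_nonneg _) (by simp)).trans (h lam hl).2

theorem IsSectorial.lipschitzOnWith (h : IsSectorial J A θ K R) :
    LipschitzOnWith (K * K).toNNReal (fun lam => J.comp (R lam)) (Sector θ) := by
  refine LipschitzOnWith.of_dist_le' fun lam hl mu hm => ?_
  have hlK := h.norm_comp_le_const hl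
  rw [dist_eq_norm, dist_eq_norm, (h mu hm).1.comp_sub_comp (h lam hl).1, norm_smul,
    norm_sub_rev, mul_comm]
  gcongr
  exact (ContinuousLinearMap.opNorm_comp_le _ _).trans
    (mul_le_mul hlK (h.norm_comp_le_const hm) (norm_nonneg _) ((norm_nonneg _).trans hlK))

end Sectorial

section Extension

namespace ContinuousLinearMap

variable {α : Type*} [MeasurableSpace α] {μ : Measure α} {p : ENNReal} [Fact (1 ≤ p)]
  {E F G : Type*} [NormedAddCommGroup E] [NormedSpace ℂ E] [NormedAddCommGroup F]
  [NormedSpace ℂ F] [NormedAddCommGroup G] [NormedSpace ℂ G]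

theorem compLpL_comp (T : F →L[ℂ] G) (S : E →L[ℂ] F) :
    (T.comp S).compLpL p μ = (T.compLpL p μ).comp (S.compLpL p μ) := by
  ext1 U
  refine Lp.ext ?_
  filter_upwards [coeFn_compLpL (p := p) (μ := μ) (T.comp S) U, coeFn_compLpL (p := p) (μ := μ) S U,
    coeFn_compLpL (p := p) (μ := μ) T (S.compLpL p μ U)] with a hTS hS hT
  rw [comp_apply, hTS, hT, hS, comp_apply]

theorem compLpL_id : (ContinuousLinearMap.id ℂ E).compLpL p μ = ContinuousLinearMap.id ℂ _ := by
  ext1 U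
  exact Lp.ext (coeFn_compLpL _ U)

theorem compLpL_apply_eq_flip (T : E →L[ℂ] F) (U : Lp E p μ) :
    T.compLpL p μ U = ((ContinuousLinearMap.id ℂ (E →L[ℂ] F)).compLpL₂ p μ).flip U T :=
  rfl

theorem integral_compLpL_apply [CompleteSpace F] {β : Type*} [MeasurableSpace β] {ν : Measure β}
    {T : β → E →L[ℂ] F} (hT : Integrable T ν) (U : Lp E p μ) :
    ∫ b, (T b).compLpL p μ U ∂ν = (∫ b, T b ∂ν).compLpL p μ U := by
  simp only [compLpL_apply_eq_flip]
  exact integral_comp_comm _ hT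

end ContinuousLinearMap

variable {α : Type*} [MeasurableSpace α] {μ : Measure α} {p : ENNReal} [Fact (1 ≤ p)]
  {J A : X₁ →L[ℂ] X₀}

open ContinuousLinearMap in
theorem IsResolventAt.compLpL {lam : ℂ} {Rl : X₀ →L[ℂ] X₁} (h : IsResolventAt J A lam Rl) :
    IsResolventAt (J.compLpL p μ) (A.compLpL p μ) lam (Rl.compLpL p μ) := by
  constructor <;> rw [← smul_compLpL, ← add_compLpL, ← compLpL_comp, ← compLpL_id]
  exacts [congrArg _ h.1, congrArg _ h.2]

open ContinuousLinearMap in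
theorem IsSectorial.compLpL {θ K : ℝ} {R : ℂ → X₀ →L[ℂ] X₁} (h : IsSectorial J A θ K R) :
    IsSectorial (J.compLpL p μ) (A.compLpL p μ) θ K (fun lam => (R lam).compLpL p μ) := by
  refine fun lam hl => ⟨(h lam hl).1.compLpL, ?_⟩
  rw [← compLpL_comp]
  exact (mul_le_mul_of_nonneg_left (norm_compLpL_le _) (by positivity)).trans (h lam hl).2

end Extension

section RayIntegral

open Complex

variable {J A : X₁ →L[ℂ] X₀} {R : ℂ → X₀ →L[ℂ] X₁} {f : ℂ → ℂ}

def rayIntegrand (J : X₁ →L[ℂ] X₀) (R : ℂ → X₀ →L[ℂ] X₁) (f : ℂ → ℂ) (e : ℂ) (r : ℝ) :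
    X₀ →L[ℂ] X₀ :=
  (f (r * e) * e) • J.comp (R (r * e))

/-- The Dunford integral of `dunford`, taken in operator norm rather than pointwise. -/
def dunfordOp (J : X₁ →L[ℂ] X₀) (R : ℂ → X₀ →L[ℂ] X₁) (θ : ℝ) (f : ℂ → ℂ) : X₀ →L[ℂ] X₀ :=
  (2 * (Real.pi : ℂ) * I)⁻¹ •
    ((∫ r in Ioi (0 : ℝ), rayIntegrand J R f (exp (θ * I)) r) -
      ∫ r in Ioi (0 : ℝ), rayIntegrand J R f (exp (-θ * I)) r)

lemma integrableOn_Ioi_ite_rpow {η : ℝ} (hη : 0 < η) :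
    IntegrableOn (fun r : ℝ => if r ≤ 1 then r ^ η else r ^ (-1 - η)) (Ioi 0) := by
  rw [← Ioc_union_Ioi_eq_Ioi zero_le_one]
  refine IntegrableOn.union ?_ ?_
  · have h : IntegrableOn (fun r : ℝ => r ^ η) (Ioc 0 1) :=
      (intervalIntegral.intervalIntegrable_rpow' (by linarith)).1
    exact h.congr_fun (fun r hr => by simp [hr.2]) measurableSet_Ioc
  · exact (integrableOn_Ioi_rpow_of_lt (a := -1 - η) (by linarith) one_pos).congr_fun
      (fun r hr => by simp [not_le.mpr (mem_Ioi.mp hr)]) measurableSet_Ioi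

lemma rpow_div_one_add_sq_div_le_ite {η r : ℝ} (hη : 0 < η) (hr : 0 < r) :
    (r / (1 + r ^ 2)) ^ η / (1 + r) ≤ if r ≤ 1 then r ^ η else r ^ (-1 - η) := by
  have hq : 0 ≤ r / (1 + r ^ 2) := by positivity
  split_ifs with h
  · calc (r / (1 + r ^ 2)) ^ η / (1 + r) ≤ (r / (1 + r ^ 2)) ^ η :=
          div_le_self (by positivity) (by linarith)
      _ ≤ r ^ η := by
          gcongr
          exact div_le_self hr.le (by nlinarith)
  · rw [not_le] at h
    calc (r / (1 + r ^ 2)) ^ η / (1 + r) ≤ r⁻¹ ^ η / r := by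
          gcongr
          · rw [div_le_iff₀ (by positivity)]
            field_simp
            nlinarith
          · linarith
      _ = r ^ (-1 - η) := by
          rw [Real.inv_rpow hr.le, ← Real.rpow_neg hr.le, div_eq_mul_inv, ← Real.rpow_neg_one r,
            ← Real.rpow_add hr, add_comm, sub_eq_add_neg]

theorem IsSectorial.integrableOn_rayIntegrand {θ θc K : ℝ} (h : IsSectorial J A θc K R)
    (hf : HzeroClass θ f) {e : ℂ} (he : ‖e‖ = 1) (hθ : θ < |arg e|) (hθc : |arg e| ≤ θc) :
    IntegrableOn (rayIntegrand J R f e) (Ioi 0) := by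
  obtain ⟨hdiff, c, hc, η, hη, hdecay⟩ := hf
  have he0 : e ≠ 0 := norm_ne_zero_iff.mp (by simp [he])
  have hmem : MapsTo (fun r : ℝ => (r : ℂ) * e) (Ioi 0) (Sector θc) :=
    fun r hr => ofReal_mul_mem_sector hr hθc
  have hmemc : MapsTo (fun r : ℝ => (r : ℂ) * e) (Ioi 0) (Sector θ)ᶜ :=
    fun r hr => ofReal_mul_mem_sector_compl he0 hr hθ
  have hnorm : ∀ r ∈ Ioi (0 : ℝ), ‖(r : ℂ) * e‖ = r := fun r hr => by
    rw [norm_mul, he, mul_one, norm_real, Real.norm_of_nonneg (le_of_lt hr)]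
  have hK : 0 ≤ K := (norm_nonneg _).trans (h.norm_comp_le_const (hmem (mem_Ioi.mpr one_pos)))
  have hray : Continuous fun r : ℝ => (r : ℂ) * e := by fun_prop
  have hcont : ContinuousOn (rayIntegrand J R f e) (Ioi 0) :=
    ((hdiff.continuousOn.comp hray.continuousOn hmemc).mul continuousOn_const).smul
      (h.lipschitzOnWith.continuousOn.comp hray.continuousOn hmem)
  refine Integrable.mono' ((integrableOn_Ioi_ite_rpow hη).const_mul (c * K))
    (hcont.aestronglyMeasurable measurableSet_Ioi) ?_
  refine (ae_restrict_iff' measurableSet_Ioi).mpr (Filter.Eventually.of_forall fun r hr => ?_)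
  have hr0 : 0 < r := hr
  have hf_le := hdecay _ (hmemc hr)
  have hR_le := h.norm_comp_le_div (hmem hr)
  rw [hnorm r hr] at hf_le hR_le
  calc ‖rayIntegrand J R f e r‖ = ‖f (r * e)‖ * ‖J.comp (R (r * e))‖ := by
        rw [rayIntegrand, norm_smul, norm_mul, he, mul_one]
    _ ≤ c * (r / (1 + r ^ 2)) ^ η * (K / (1 + r)) :=
        mul_le_mul hf_le hR_le (norm_nonneg _) (by positivity)
    _ = c * K * ((r / (1 + r ^ 2)) ^ η / (1 + r)) := by ring
    _ ≤ c * K * (if r ≤ 1 then r ^ η else r ^ (-1 - η)) := by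
        gcongr
        exact rpow_div_one_add_sq_div_le_ite hη hr0

end RayIntegral

section Boundary

open Complex

variable {J A : X₁ →L[ℂ] X₀} {R : ℂ → X₀ →L[ℂ] X₁} {f : ℂ → ℂ} {θ θc : ℝ}

theorem IsSectorial.integrableOn_rayIntegrand_exp {K : ℝ} (h : IsSectorial J A θc K R)
    (hf : HzeroClass θ f) (hθc : θc ∈ Ioo θ Real.pi) {s : ℝ} (hs : |s| = θc) :
    IntegrableOn (rayIntegrand J R f (exp (s * I))) (Ioi 0) := by
  have harg : |arg (exp (s * I))| = θc := by
    rw [abs_arg_exp_ofReal_mul_I (hs ▸ hθc.2), hs]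
  exact h.integrableOn_rayIntegrand hf (norm_exp_ofReal_mul_I s) (harg ▸ hθc.1) harg.le

theorem IsSectorial.integrableOn_rayIntegrand_boundary {K : ℝ} (h : IsSectorial J A θc K R)
    (hf : HzeroClass θ f) (hθ : 0 ≤ θ) (hθc : θc ∈ Ioo θ Real.pi) :
    IntegrableOn (rayIntegrand J R f (exp (θc * I))) (Ioi 0) ∧
      IntegrableOn (rayIntegrand J R f (exp (-θc * I))) (Ioi 0) := by
  have hθc0 : 0 < θc := hθ.trans_lt hθc.1
  refine ⟨h.integrableOn_rayIntegrand_exp hf hθc (abs_of_pos hθc0), ?_⟩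
  have hneg := h.integrableOn_rayIntegrand_exp hf hθc (s := -θc) (by simp [abs_of_pos hθc0])
  rwa [ofReal_neg] at hneg

theorem dunford_eq_dunfordOp_apply
    (hpos : IntegrableOn (rayIntegrand J R f (exp (θ * I))) (Ioi 0))
    (hneg : IntegrableOn (rayIntegrand J R f (exp (-θ * I))) (Ioi 0)) (x : X₀) :
    dunford J R θ f x = dunfordOp J R θ f x := by
  simp only [dunfordOp, smul_apply, sub_apply, ContinuousLinearMap.integral_apply hpos,
    ContinuousLinearMap.integral_apply hneg]
  rfl

variable {α : Type*} [MeasurableSpace α] {μ : Measure α} {p : ENNReal} [Fact (1 ≤ p)]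

open ContinuousLinearMap in
theorem dunford_compLpL [CompleteSpace X₀]
    (hpos : IntegrableOn (rayIntegrand J R f (exp (θ * I))) (Ioi 0))
    (hneg : IntegrableOn (rayIntegrand J R f (exp (-θ * I))) (Ioi 0)) (U : Lp X₀ p μ) :
    dunford (J.compLpL p μ) (fun lam => (R lam).compLpL p μ) θ f U
      = (dunfordOp J R θ f).compLpL p μ U := by
  have hray : ∀ (e : ℂ) (r : ℝ), (f (r * e) * e) • J.compLpL p μ ((R (r * e)).compLpL p μ U)
      = (rayIntegrand J R f e r).compLpL p μ U := fun e r => by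
    rw [rayIntegrand, smul_compLpL, smul_apply, compLpL_comp, comp_apply]
  simp only [dunford, hray]
  rw [dunfordOp, compLpL_apply_eq_flip, map_smul, map_sub, ← compLpL_apply_eq_flip,
    ← compLpL_apply_eq_flip, ← integral_compLpL_apply hpos, ← integral_compLpL_apply hneg]
  rfl

theorem IsSectorial.ae_dunford_compLpL [CompleteSpace X₀] {K : ℝ} (h : IsSectorial J A θc K R)
    (hf : HzeroClass θ f) (hθ : 0 ≤ θ) (hθc : θc ∈ Ioo θ Real.pi) (U : Lp X₀ p μ) :
    ∀ᵐ ω ∂μ, dunford (J.compLpL p μ) (fun lam => (R lam).compLpL p μ) θc f U ω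
      = dunford J R θc f (U ω) := by
  obtain ⟨hpos, hneg⟩ := h.integrableOn_rayIntegrand_boundary hf hθ hθc
  rw [dunford_compLpL hpos hneg]
  filter_upwards [(dunfordOp J R θc f).coeFn_compLpL U] with ω hω
  rw [hω, dunford_eq_dunfordOp_apply hpos hneg]

theorem HinftyBound.compLpL [CompleteSpace X₀] {K C : ℝ} (hcal : HinftyBound J R θc θ C)
    (h : IsSectorial J A θc K R) (hθ : 0 ≤ θ) (hθc : θc ∈ Ioo θ Real.pi) :
    HinftyBound (J.compLpL p μ) (fun lam => (R lam).compLpL p μ) θc θ C := fun f hf U =>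
  Lp.norm_le_mul_norm_of_ae_le_mul <| by
    filter_upwards [h.ae_dunford_compLpL hf hθ hθc U] with ω hω
    rw [hω]
    exact hcal f hf (U ω)

end Boundary

theorem hinfty_extension_to_Lp_general
    {X XD : Type*} [NormedAddCommGroup X] [NormedSpace ℂ X] [CompleteSpace X]
    [NormedAddCommGroup XD] [NormedSpace ℂ XD]
    {Ω : Type*} [MeasurableSpace Ω] (μ : MeasureTheory.Measure Ω)
    (p : ENNReal) [Fact (1 ≤ p)]
    (J A : XD →L[ℂ] X)
    (θ θc K C : ℝ) (hθ : θ ∈ Set.Ico 0 Real.pi) (hθc : θc ∈ Set.Ioo θ Real.pi)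
    (R : ℂ → X →L[ℂ] XD) (hsect : IsSectorial J A θc K R)
    (hcal : HinftyBound J R θc θ C) :
    -- the pointwise extensions of `J`, `A` and of the resolvents
    (∀ lam ∈ Sector θc,
      IsResolventAt (ContinuousLinearMap.compLpL p μ J)
        (ContinuousLinearMap.compLpL p μ A) lam
        (ContinuousLinearMap.compLpL p μ (R lam))) ∧
    -- sectoriality and the `H^∞`-calculus bound of the extension
    (∃ K' : ℝ, IsSectorial (ContinuousLinearMap.compLpL p μ J)
      (ContinuousLinearMap.compLpL p μ A) θc K'
      (fun lam => ContinuousLinearMap.compLpL p μ (R lam))) ∧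
    (∃ C' : ℝ, HinftyBound (ContinuousLinearMap.compLpL p μ J)
      (fun lam => ContinuousLinearMap.compLpL p μ (R lam)) θc θ C') ∧
    -- the resolvents act pointwise a.e.
    (∀ lam ∈ Sector θc, ∀ U : MeasureTheory.Lp X p μ,
      ∀ᵐ ω ∂μ, (ContinuousLinearMap.compLpL p μ (R lam) U) ω = R lam (U ω)) ∧
    -- the functional calculus acts pointwise a.e.
    (∀ f : ℂ → ℂ, HzeroClass θ f → ∀ U : MeasureTheory.Lp X p μ,
      ∀ᵐ ω ∂μ,
        dunford (ContinuousLinearMap.compLpL p μ J)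
            (fun lam => ContinuousLinearMap.compLpL p μ (R lam)) θc f U ω
          = dunford J R θc f (U ω)) :=
  ⟨fun lam hl => (hsect lam hl).1.compLpL, ⟨K, hsect.compLpL⟩,
    ⟨C, hcal.compLpL hsect hθ.1 hθc⟩, fun lam _ U => (R lam).coeFn_compLpL U,
    fun _ hf U => hsect.ae_dunford_compLpL hf hθ.1 hθc U⟩

/-- The canonical (pointwise) extension of an operator `A` with bounded
`H^∞(θ)`-calculus on `X` to the Bochner space `L^p(Ω;X)` over a σ-finite measure space
again has bounded `H^∞`-calculus of angle `θ`, with resolvents and functional calculus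
acting pointwise a.e. -/
theorem hinfty_extension_to_Lp
    {X XD : Type*} [NormedAddCommGroup X] [NormedSpace ℂ X] [CompleteSpace X]
    [NormedAddCommGroup XD] [NormedSpace ℂ XD] [CompleteSpace XD]
    {Ω : Type*} [MeasurableSpace Ω] (μ : MeasureTheory.Measure Ω) [SigmaFinite μ]
    (p : ENNReal) [Fact (1 ≤ p)] (hp1 : 1 < p) (hptop : p ≠ ⊤)
    (J A : XD →L[ℂ] X) (hJinj : Function.Injective J) (hJdense : DenseRange J)
    (θ θc K C : ℝ) (hθ : θ ∈ Set.Ico 0 Real.pi) (hθc : θc ∈ Set.Ioo θ Real.pi)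
    (R : ℂ → X →L[ℂ] XD) (hsect : IsSectorial J A θc K R)
    (hcal : HinftyBound J R θc θ C) :
    -- the pointwise extensions of `J`, `A` and of the resolvents
    (∀ lam ∈ Sector θc,
      IsResolventAt (ContinuousLinearMap.compLpL p μ J)
        (ContinuousLinearMap.compLpL p μ A) lam
        (ContinuousLinearMap.compLpL p μ (R lam))) ∧
    -- sectoriality and the `H^∞`-calculus bound of the extension
    (∃ K' : ℝ, IsSectorial (ContinuousLinearMap.compLpL p μ J)
      (ContinuousLinearMap.compLpL p μ A) θc K'
      (fun lam => ContinuousLinearMap.compLpL p μ (R lam))) ∧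
    (∃ C' : ℝ, HinftyBound (ContinuousLinearMap.compLpL p μ J)
      (fun lam => ContinuousLinearMap.compLpL p μ (R lam)) θc θ C') ∧
    -- the resolvents act pointwise a.e.
    (∀ lam ∈ Sector θc, ∀ U : MeasureTheory.Lp X p μ,
      ∀ᵐ ω ∂μ, (ContinuousLinearMap.compLpL p μ (R lam) U) ω = R lam (U ω)) ∧
    -- the functional calculus acts pointwise a.e.
    (∀ f : ℂ → ℂ, HzeroClass θ f → ∀ U : MeasureTheory.Lp X p μ,
      ∀ᵐ ω ∂μ,
        dunford (ContinuousLinearMap.compLpL p μ J)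
            (fun lam => ContinuousLinearMap.compLpL p μ (R lam)) θc f U ω
          = dunford J R θc f (U ω)) :=
  hinfty_extension_to_Lp_general μ p J A θ θc K C hθ hθc R hsect hcal
end
end
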